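/- Let N ≥ 1 be an integer, m > 0 a real number, and μ_i ∈ [0, m] for each i ∈ {1,…,N}. Let c_{i,t} ≥ 0 be real numbers for i ∈ {1,…,N} and t in an integer interval {τ, τ+1, …, τ'} with τ ≤ τ', containing Δ = τ' − τ + 1 time points. Let V = Σ_{t=τ}^{τ'−1} max_{1≤i≤N} |c_{i,t+1} − c_{i,t}|, and suppose I* ∈ {1,…,N} satisfies Σ_{t=τ}^{τ'} μ_{I*}·c_{I*,t} = max_{1≤i≤N} Σ_{t=τ}^{τ'} μ_i·c_{i,t}. Then Σ_{t=τ}^{τ'} ( max_{1≤i≤N} μ_i·c_{i,t} − μ_{I*}·c_{I*,t} ) ≤ 2·Δ·m·V. -/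

import Mathlib

/-!
Every action's reward drifts by at most `m V` between any two times of the batch, since
`|c_{i,t} − c_{i,s}|` telescopes into at most `V`. Hence the action attaining the optimum at a
time `t` earns, on average over the batch, at least `max_i μ_i c_{i,t} − m V`, and `I*` earns on
average at least as much as any action. Summing over the `Δ` times bounds the gap by `Δ m V`,
half of the stated bound.
-/

open Finset

lemma abs_sub_le_sum_Ico_abs_sub (x : ℕ → ℝ) {a b s t : ℕ} (hs : s ∈ Icc a b)
    (ht : t ∈ Icc a b) : |x t - x s| ≤ ∑ u ∈ Ico a b, |x (u + 1) - x u| := by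
  wlog hst : s ≤ t generalizing s t
  · rw [abs_sub_comm]
    exact this ht hs (le_of_not_ge hst)
  rw [mem_Icc] at hs ht
  calc |x t - x s| = dist (x s) (x t) := by rw [Real.dist_eq, abs_sub_comm]
    _ ≤ ∑ u ∈ Ico s t, dist (x u) (x (u + 1)) := dist_le_Ico_sum_dist x hst
    _ = ∑ u ∈ Ico s t, |x (u + 1) - x u| := by simp only [Real.dist_eq, abs_sub_comm]
    _ ≤ ∑ u ∈ Ico a b, |x (u + 1) - x u| :=
      sum_le_sum_of_subset_of_nonneg (Ico_subset_Ico hs.1 ht.2) fun _ _ _ ↦ abs_nonneg _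

lemma mul_le_mul_add_of_abs_sub_le {w m x y V : ℝ} (hw : w ∈ Set.Icc 0 m)
    (hxy : |x - y| ≤ V) : w * x ≤ w * y + m * V := by
  have hV : 0 ≤ V := (abs_nonneg _).trans hxy
  have : w * (x - y) ≤ m * V :=
    calc w * (x - y) ≤ w * |x - y| := mul_le_mul_of_nonneg_left (le_abs_self _) hw.1
      _ ≤ m * V := mul_le_mul hw.2 hxy (abs_nonneg _) (hw.1.trans hw.2)
  linarith

lemma sum_sup'_sub_le_card_mul {ι κ : Type*} (s : Finset ι) (hs : s.Nonempty) (T : Finset κ)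
    (f : ι → κ → ℝ) (ε : ℝ) (hf : ∀ i ∈ s, ∀ t ∈ T, ∀ t' ∈ T, f i t ≤ f i t' + ε) (I : ι)
    (hI : ∀ i ∈ s, ∑ t ∈ T, f i t ≤ ∑ t ∈ T, f I t) :
    ∑ t ∈ T, (s.sup' hs (f · t) - f I t) ≤ #T * ε := by
  rcases T.eq_empty_or_nonempty with rfl | hT
  · simp
  have hpointwise (t) (ht : t ∈ T) : #T * s.sup' hs (f · t) ≤ ∑ t' ∈ T, f I t' + #T * ε := by
    obtain ⟨j, hj, hjt⟩ := exists_mem_eq_sup' hs (f · t)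
    calc #T * s.sup' hs (f · t) = ∑ t' ∈ T, f j t := by rw [hjt, sum_const, nsmul_eq_mul]
      _ ≤ ∑ t' ∈ T, (f j t' + ε) := sum_le_sum fun t' ht' ↦ hf j hj t ht t' ht'
      _ ≤ ∑ t' ∈ T, f I t' + #T * ε := by
        rw [sum_add_distrib, sum_const, nsmul_eq_mul]
        linarith [hI j hj]
  have hsum : #T * ∑ t ∈ T, s.sup' hs (f · t) ≤ #T * (∑ t ∈ T, f I t + #T * ε) := by
    rw [mul_sum]
    simpa only [sum_const, nsmul_eq_mul] using sum_le_sum hpointwise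
  have hcard : (0 : ℝ) < #T := by exact_mod_cast hT.card_pos
  rw [sum_sub_distrib]
  linarith [le_of_mul_le_mul_left hsum hcard]

/-- Step 2 of the proof of Lemma 1: over a batch of `Δ = τ' − τ + 1` consecutive times,
the cumulative gap between the nonstationary optimum `max_i μ_i c_{i,t}` and the best
single action `I*` of the batch is at most `2·Δ·m·V`. -/
theorem batch_gap_le_variation
    (N : ℕ) (hN : 1 ≤ N) (m : ℝ) (hm : 0 < m)
    (μ : ℕ → ℝ) (hμ : ∀ i < N, μ i ∈ Set.Icc (0 : ℝ) m)
    (τ τ' : ℕ) (hττ' : τ ≤ τ')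
    (Δ : ℕ) (hΔ : Δ = τ' - τ + 1)
    (c : ℕ → ℕ → ℝ)
    (V : ℝ)
    (hV : V = ∑ t ∈ Finset.Ico τ τ',
        (Finset.range N).sup' (by simp; omega) (fun i => |c i (t + 1) - c i t|))
    (I : ℕ)
    (hopt : ∑ t ∈ Finset.Icc τ τ', μ I * c I t
        = (Finset.range N).sup' (by simp; omega)
            (fun i => ∑ t ∈ Finset.Icc τ τ', μ i * c i t)) :
    ∑ t ∈ Finset.Icc τ τ',
        ((Finset.range N).sup' (by simp; omega) (fun i => μ i * c i t) - μ I * c I t)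
      ≤ 2 * (Δ : ℝ) * m * V := by
  have hvar (i) (hi : i < N) (s) (hs : s ∈ Icc τ τ') (t) (ht : t ∈ Icc τ τ') :
      |c i t - c i s| ≤ V := by
    rw [hV]
    exact (abs_sub_le_sum_Ico_abs_sub (c i) hs ht).trans <| sum_le_sum fun u _ ↦
      le_sup' (fun j ↦ |c j (u + 1) - c j u|) (mem_range.2 hi)
  have hV0 : 0 ≤ V := (abs_nonneg _).trans (hvar 0 hN τ (by simp [hττ']) τ (by simp [hττ']))
  have hcard : (#(Icc τ τ') : ℝ) = Δ := by
    rw [Nat.card_Icc, hΔ]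
    norm_cast
    omega
  have hgap := sum_sup'_sub_le_card_mul (range N) (by simp; omega) (Icc τ τ')
    (fun i t ↦ μ i * c i t) (m * V)
    (fun i hi t ht t' ht' ↦ mul_le_mul_add_of_abs_sub_le (hμ i (mem_range.1 hi))
      (hvar i (mem_range.1 hi) t' ht' t ht))
    I (fun i hi ↦ hopt ▸ le_sup' (fun i ↦ ∑ t ∈ Icc τ τ', μ i * c i t) hi)
  rw [hcard] at hgap
  linarith [mul_nonneg (mul_nonneg (Nat.cast_nonneg Δ) hm.le) hV0]
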